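/- Let φ : (C,S) → (D,T) be an admissible morphism of quasi-schemoids, where (C,S) is finite with underlying category a groupoid and (D,T) is a basic schemoid. Then for any σ ∈ S there exists a positive integer n_σ^φ such that for every object x of C and every morphism g ∈ φ(σ) with t(g) = φ(x), ♯(φ⁻¹(g) ∩ xσ) = n_σ^φ, where xσ = {f ∈ σ | t(f) = x}. -/

import Mathlib

open CategoryTheory

universe v u

/-- The set of all morphisms of a category, bundled with their endpoints. -/
def Mor (C : Type u) [Category.{v} C] : Type max u v := Σ (x y : C), x ⟶ y

namespace Mor
variable {C : Type u} [Category.{v} C]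
/-- The source of a morphism. -/
def src (m : Mor C) : C := m.1
/-- The target of a morphism. -/
def tgt (m : Mor C) : C := m.2.1
end Mor

/-- The identity of `x` as an element of `Mor C`. -/
def idMor {C : Type u} [Category.{v} C] (x : C) : Mor C := ⟨x, x, 𝟙 x⟩

/-- Bundle a morphism into `Mor C`. -/
def mk3 {C : Type u} [Category.{v} C] {x y : C} (f : x ⟶ y) : Mor C := ⟨x, y, f⟩

/-- `IsComp a b m` holds iff `a` and `b` are composable (the target of `b` is the
source of `a`) and the composite `a ∘ b` equals `m`. -/
def IsComp {C : Type u} [Category.{v} C] (a b m : Mor C) : Prop :=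
  ∃ (x y z : C) (f : x ⟶ y) (g : y ⟶ z), b = mk3 f ∧ a = mk3 g ∧ m = mk3 (f ≫ g)

/-- The fiber over `m` of the concatenation map `π_{στ} : σ ×_{ob C} τ → mor C`,
where `σ` is the class of the second (outer) factor and `τ` that of the first
(inner) factor. -/
def compFiber {C : Type u} [Category.{v} C] (σ τ : Set (Mor C)) (m : Mor C) :
    Set (Mor C × Mor C) :=
  {p | p.1 ∈ σ ∧ p.2 ∈ τ ∧ IsComp p.1 p.2 m}

/-- A quasi-schemoid: a small category together with a partition of its set of
morphisms satisfying the concatenation axiom. -/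
structure QuasiSchemoid (C : Type u) [Category.{v} C] where
  part : Set (Set (Mor C))
  isPartition : Setoid.IsPartition part
  concat : ∀ σ ∈ part, ∀ τ ∈ part, ∀ μ ∈ part, ∀ f ∈ μ, ∀ g ∈ μ,
    Nonempty ((compFiber σ τ f : Set (Mor C × Mor C)) ≃ (compFiber σ τ g : Set (Mor C × Mor C)))

/-- `p^μ_{τσ} = n` : every `m ∈ μ` has exactly `n` factorizations with outer factor
in `τ` and inner factor in `σ`. -/
def structEq {C : Type u} [Category.{v} C] (τ σ μ : Set (Mor C)) (n : ℕ) : Prop :=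
  ∀ m ∈ μ, Nat.card (compFiber τ σ m) = n

/-- The set `J₀` of identities. -/
def J0 (C : Type u) [Category.{v} C] : Set (Mor C) := {m | ∃ x : C, m = idMor x}

/-- A quasi-schemoid is unital if every class meeting `J₀` is contained in `J₀`. -/
def QuasiSchemoid.IsUnital {C : Type u} [Category.{v} C] (Q : QuasiSchemoid C) : Prop :=
  ∀ σ ∈ Q.part, (σ ∩ J0 C).Nonempty → σ ⊆ J0 C

/-- A contravariant endofunctor. -/
structure ContraFunctor (C : Type u) [Category.{v} C] where
  obj : C → C
  map : ∀ {x y : C}, (x ⟶ y) → (obj y ⟶ obj x)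
  map_id : ∀ x : C, map (𝟙 x) = 𝟙 (obj x)
  map_comp : ∀ {x y z : C} (f : x ⟶ y) (g : y ⟶ z), map (f ≫ g) = map g ≫ map f

/-- The action of a contravariant functor on bundled morphisms. -/
def ContraFunctor.onMor {C : Type u} [Category.{v} C] (T : ContraFunctor C) (m : Mor C) :
    Mor C :=
  ⟨T.obj m.2.1, T.obj m.1, T.map m.2.2⟩

/-- The set `J` of endomorphisms. -/
def JEndo (C : Type u) [Category.{v} C] : Set (Mor C) := {m | m.src = m.tgt}

/-- An association schemoid. -/
structure AssnSchemoid (C : Type u) [Category.{v} C] extends QuasiSchemoid C where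
  T : ContraFunctor C
  T_invol : ∀ m : Mor C, T.onMor (T.onMor m) = m
  T_part : ∀ σ ∈ part, T.onMor '' σ ∈ part
  endo : ∀ σ ∈ part, (σ ∩ JEndo C).Nonempty → σ ⊆ JEndo C

universe v₂ u₂

/-- The action of a functor on bundled morphisms. -/
def morMap {C : Type u} {D : Type u₂} [Category.{v} C] [Category.{v₂} D] (F : C ⥤ D)
    (m : Mor C) : Mor D :=
  ⟨F.obj m.1, F.obj m.2.1, F.map m.2.2⟩

/-- A functor is a morphism of quasi-schemoids if each class of the source partition is
mapped into some class of the target partition. -/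
def IsQSMor {C : Type u} {D : Type u₂} [Category.{v} C] [Category.{v₂} D]
    (SC : Set (Set (Mor C))) (SD : Set (Set (Mor D))) (F : C ⥤ D) : Prop :=
  ∀ σ ∈ SC, ∃ τ ∈ SD, morMap F '' σ ⊆ τ

/-- A morphism of association schemoids: a morphism of quasi-schemoids commuting with the
contravariant involutions. -/
def IsASMor {C : Type u} {D : Type u₂} [Category.{v} C] [Category.{v₂} D]
    (SC : Set (Set (Mor C))) (SD : Set (Set (Mor D)))
    (TC : ContraFunctor C) (TD : ContraFunctor D) (F : C ⥤ D) : Prop :=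
  IsQSMor SC SD F ∧ ∀ m : Mor C, morMap F (TC.onMor m) = TD.onMor (morMap F m)

/-- `S₀` : the classes containing some identity. -/
def S0 {C : Type u} [Category.{v} C] (S : Set (Set (Mor C))) : Set (Set (Mor C)) :=
  {α | α ∈ S ∧ ∃ x : C, idMor x ∈ α}

/-- `_αS_β = {σ ∈ S | p^σ_{σα} = p^σ_{βσ} = 1}`. -/
def hom2 {C : Type u} [Category.{v} C] (S : Set (Set (Mor C))) (α β : Set (Mor C)) :
    Set (Set (Mor C)) :=
  {σ | σ ∈ S ∧ structEq σ α σ 1 ∧ structEq β σ σ 1}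

/-- The partition class containing a given morphism. -/
def classOf {C : Type u} [Category.{v} C] (S : Set (Set (Mor C))) (m : Mor C) :
    Set (Mor C) :=
  {m' | ∃ σ ∈ S, m ∈ σ ∧ m' ∈ σ}

/-- An admissible morphism of quasi-schemoids (Definition 6.2 of Kuribayashi–Matsuo):
a morphism of quasi-schemoids `φ` such that for every object `x`, every class `σ` and
every `g ∈ φ(σ)` with `t(g) = φ(x)`, there is `f ∈ σ` with `t(f) = x` and `φ(f) = g`. -/
def IsAdmissible {C : Type u} {D : Type u₂} [Category.{v} C] [Category.{v₂} D]
    (SC : Set (Set (Mor C))) (SD : Set (Set (Mor D))) (F : C ⥤ D) : Prop :=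
  IsQSMor SC SD F ∧
    ∀ (x : C), ∀ σ ∈ SC, ∀ g ∈ morMap F '' σ, Mor.tgt g = F.obj x →
      ∃ f ∈ σ, Mor.tgt f = x ∧ morMap F f = g

/-!
Let `K` be the set of morphisms that `φ` sends to identities. For `m ∈ σ`, the `f ∈ σ` with
`t(f) = t(m)` and `φ(f) = φ(m)` correspond bijectively, via `f ↦ (f, f⁻¹ ∘ m)`, to the
factorizations `m = f ∘ k` with `f ∈ σ` and `k ∈ K`; this uses that `C` is a groupoid. Since
`D` is unital and `φ` maps classes into classes, `K` is a union of classes of `S`, so the number of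
such factorizations is a sum of structure constants and does not depend on `m ∈ σ`. Admissibility
writes every `g ∈ φ(σ)` with `t(g) = φ(x)` as `φ(m)` with `m ∈ σ` and `t(m) = x`.
-/

section Composition

variable {C : Type u} [Category.{v} C]

lemma mk3_inj {x y : C} {f g : x ⟶ y} : mk3 f = mk3 g ↔ f = g :=
  ⟨fun h => eq_of_heq (Sigma.mk.inj (eq_of_heq (Sigma.mk.inj h).2)).2, congrArg mk3⟩

lemma IsComp.tgt_eq {a b m : Mor C} (h : IsComp a b m) : a.tgt = m.tgt := by
  obtain ⟨x, y, z, f, g, rfl, rfl, rfl⟩ := h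
  rfl

lemma IsComp.map {D : Type u₂} [Category.{v₂} D] (F : C ⥤ D) {a b m : Mor C}
    (h : IsComp a b m) : IsComp (morMap F a) (morMap F b) (morMap F m) := by
  obtain ⟨x, y, z, f, g, rfl, rfl, rfl⟩ := h
  exact ⟨_, _, _, F.map f, F.map g, rfl, rfl, by rw [← F.map_comp]; rfl⟩

lemma IsComp.eq_of_mem_J0 {a b m : Mor C} (h : IsComp a b m) (hb : b ∈ J0 C) : a = m := by
  obtain ⟨x, y, z, f, g, rfl, rfl, rfl⟩ := h
  obtain ⟨w, hw⟩ := hb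
  obtain rfl : x = w := congrArg Mor.src hw
  obtain rfl : y = x := congrArg Mor.tgt hw
  obtain rfl : f = 𝟙 y := mk3_inj.mp hw
  simp

lemma IsComp.mem_J0_of_mono {a b : Mor C} (h : IsComp a b a) (ha : Mono a.2.2) : b ∈ J0 C := by
  obtain ⟨x, y, z, f, g, rfl, hg, hfg⟩ := h
  subst hg
  obtain rfl : y = x := congrArg Mor.src hfg
  have : Mono g := ha
  have : 𝟙 y ≫ g = f ≫ g := by simpa using mk3_inj.mp hfg
  exact ⟨y, by rw [← (cancel_mono g).mp this]; rfl⟩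

end Composition

section Groupoid

variable {C : Type u} [Groupoid.{v} C]

lemma IsComp.right_unique {a b b' m : Mor C} (h : IsComp a b m) (h' : IsComp a b' m) :
    b = b' := by
  obtain ⟨x, y, z, f, g, rfl, rfl, rfl⟩ := h
  obtain ⟨x', y', z', f', g', rfl, hg, hm⟩ := h'
  obtain rfl : y = y' := congrArg Mor.src hg
  obtain rfl : z = z' := congrArg Mor.tgt hg
  obtain rfl : g = g' := mk3_inj.mp hg
  obtain rfl : x = x' := congrArg Mor.src hm
  rw [(cancel_mono g).mp (mk3_inj.mp hm)]

lemma exists_isComp_of_tgt_eq {a m : Mor C} (h : a.tgt = m.tgt) : ∃ b, IsComp a b m := by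
  obtain ⟨y, z, g⟩ := a
  obtain ⟨x, z', f⟩ := m
  obtain rfl : z = z' := h
  exact ⟨mk3 (f ≫ Groupoid.inv g), x, y, z, _, g, rfl, rfl,
    by rw [Category.assoc, Groupoid.inv_comp, Category.comp_id]; rfl⟩

lemma image_fst_compFiber_preimage_J0 {D : Type u₂} [Category.{v₂} D] (φ : C ⥤ D)
    (σ : Set (Mor C)) (m : Mor C) :
    Prod.fst '' compFiber σ (morMap φ ⁻¹' J0 D) m =
      {f | f ∈ σ ∧ Mor.tgt f = Mor.tgt m ∧ morMap φ f = morMap φ m} := by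
  ext a
  constructor
  · rintro ⟨⟨a, b⟩, ⟨ha, hb, hab⟩, rfl⟩
    exact ⟨ha, hab.tgt_eq, (hab.map φ).eq_of_mem_J0 hb⟩
  · rintro ⟨ha, htgt, hφ⟩
    obtain ⟨b, hab⟩ := exists_isComp_of_tgt_eq htgt
    have hφab : IsComp (morMap φ a) (morMap φ b) (morMap φ a) := hφ ▸ hab.map φ
    have hb : morMap φ b ∈ J0 D :=
      hφab.mem_J0_of_mono (show Mono (φ.map a.2.2) by infer_instance)
    exact ⟨(a, b), ⟨ha, hb, hab⟩, rfl⟩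

lemma card_fiber_eq_card_compFiber {D : Type u₂} [Category.{v₂} D] (φ : C ⥤ D)
    (σ : Set (Mor C)) (m : Mor C) :
    Nat.card {f | f ∈ σ ∧ Mor.tgt f = Mor.tgt m ∧ morMap φ f = morMap φ m} =
      Nat.card (compFiber σ (morMap φ ⁻¹' J0 D) m) := by
  rw [← image_fst_compFiber_preimage_J0, Nat.card_image_of_injOn]
  rintro ⟨a, b⟩ ⟨-, -, hab⟩ ⟨a', b'⟩ ⟨-, -, hab'⟩ (rfl : a = a')
  rw [show b = b' from hab.right_unique hab']

end Groupoid

def IsUnionOfClasses {α : Type*} (S : Set (Set α)) (K : Set α) : Prop :=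
  ∀ τ ∈ S, (τ ∩ K).Nonempty → τ ⊆ K

lemma IsQSMor.isUnionOfClasses_preimage {C : Type u} {D : Type u₂} [Category.{v} C]
    [Category.{v₂} D] {SC : Set (Set (Mor C))} {SD : Set (Set (Mor D))} {F : C ⥤ D}
    (hF : IsQSMor SC SD F) {K : Set (Mor D)} (hK : IsUnionOfClasses SD K) :
    IsUnionOfClasses SC (morMap F ⁻¹' K) := by
  rintro τ hτ ⟨k, hkτ, hkK⟩ k' hk'τ
  obtain ⟨τ', hτ', hsub⟩ := hF τ hτ
  exact hK τ' hτ' ⟨morMap F k, hsub ⟨k, hkτ, rfl⟩, hkK⟩ (hsub ⟨k', hk'τ, rfl⟩)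

namespace Setoid.IsPartition

variable {C : Type u} [Category.{v} C] {S : Set (Set (Mor C))} {K : Set (Mor C)}

lemma compFiber_eq_iUnion (hS : IsPartition S) (hK : IsUnionOfClasses S K)
    (σ : Set (Mor C)) (m : Mor C) :
    compFiber σ K m = ⋃ τ : {τ // τ ∈ S ∧ τ ⊆ K}, compFiber σ τ m := by
  ext p
  simp only [compFiber, Set.mem_iUnion, Set.mem_ofPred_eq]
  constructor
  · rintro ⟨hσ, hK', hcomp⟩
    obtain ⟨τ, ⟨hτ, hpτ⟩, -⟩ := hS.2 p.2
    exact ⟨⟨τ, hτ, hK τ hτ ⟨p.2, hpτ, hK'⟩⟩, hσ, hpτ, hcomp⟩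
  · rintro ⟨τ, hσ, hpτ, hcomp⟩
    exact ⟨hσ, τ.2.2 hpτ, hcomp⟩

lemma pairwise_disjoint_compFiber (hS : IsPartition S) (σ : Set (Mor C)) (m : Mor C) :
    Pairwise (Function.onFun Disjoint fun τ : {τ // τ ∈ S ∧ τ ⊆ K} =>
      compFiber σ τ m) := by
  intro τ τ' hne
  refine Set.disjoint_left.mpr fun p hp hp' => hne (Subtype.ext ?_)
  obtain ⟨ρ, -, hρ⟩ := hS.2 p.2
  exact (hρ τ ⟨τ.2.1, hp.2.1⟩).trans (hρ τ' ⟨τ'.2.1, hp'.2.1⟩).symm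

end Setoid.IsPartition

/-- The concatenation axiom extends from classes to unions of classes. -/
lemma QuasiSchemoid.card_compFiber_eq {C : Type u} [Category.{v} C] (Q : QuasiSchemoid C)
    {K : Set (Mor C)} (hK : IsUnionOfClasses Q.part K) {σ μ : Set (Mor C)}
    (hσ : σ ∈ Q.part) (hμ : μ ∈ Q.part) {m m' : Mor C} (hm : m ∈ μ) (hm' : m' ∈ μ) :
    Nat.card (compFiber σ K m) = Nat.card (compFiber σ K m') := by
  let asSigma := fun m => (Equiv.setCongr (Q.isPartition.compFiber_eq_iUnion hK σ m)).trans
    (Set.unionEqSigmaOfDisjoint (Q.isPartition.pairwise_disjoint_compFiber σ m))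
  exact Nat.card_congr <| (asSigma m).trans <|
    (Equiv.sigmaCongrRight fun τ : {τ // τ ∈ Q.part ∧ τ ⊆ K} =>
      (Q.concat σ hσ τ.1 τ.2.1 μ hμ m hm m' hm').some).trans (asSigma m').symm

/-- Lemma 6.5 of Kuribayashi–Matsuo: for an admissible morphism `φ : (C,S) → (D,T)`
from a finite quasi-schemoid whose underlying category is a groupoid to a basic
schemoid, every `σ ∈ S` has a positive integer `n_σ^φ` such that
`♯(φ⁻¹(g) ∩ xσ) = n_σ^φ` for every object `x` and every `g ∈ φ(σ)` with
`t(g) = φ(x)`. -/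
theorem isAdmissible_fiber_count
    {C : Type u} {D : Type u} [Groupoid.{v} C] [Groupoid.{v} D] [Finite (Mor C)]
    (QC : QuasiSchemoid C) (QD : QuasiSchemoid D) (hQD : QD.IsUnital)
    (φ : C ⥤ D) (hadm : IsAdmissible QC.part QD.part φ) :
    ∀ σ ∈ QC.part, ∃ n : ℕ, 0 < n ∧
      ∀ (x : C), ∀ g ∈ morMap φ '' σ, Mor.tgt g = φ.obj x →
        Nat.card ({f | f ∈ σ ∧ Mor.tgt f = x ∧ morMap φ f = g} : Set (Mor C)) = n := by
  intro σ hσ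
  obtain ⟨m₀, hm₀⟩ := Setoid.nonempty_of_mem_partition QC.isPartition hσ
  have hK : IsUnionOfClasses QC.part (morMap φ ⁻¹' J0 D) := hadm.1.isUnionOfClasses_preimage hQD
  let fiber₀ : Set (Mor C) :=
    {f | f ∈ σ ∧ Mor.tgt f = Mor.tgt m₀ ∧ morMap φ f = morMap φ m₀}
  have : Nonempty fiber₀ := ⟨⟨m₀, hm₀, rfl, rfl⟩⟩
  refine ⟨Nat.card fiber₀, Nat.card_pos, fun x g hg hgx => ?_⟩
  obtain ⟨f, hf, rfl, rfl⟩ := hadm.2 x σ hσ g hg hgx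
  rw [card_fiber_eq_card_compFiber, card_fiber_eq_card_compFiber,
    QC.card_compFiber_eq hK hσ hσ hf hm₀]
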